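/- If x ∈ Z[ω] is not divisible by √2 (i.e., gde(x, √2) = 0), then exactly one of P(x) and Q(x) is odd: either P(x) is even and Q(x) is odd, or P(x) is odd and Q(x) is even. -/
import Mathlib


noncomputable section

open Complex

/-- The eighth root of unity ω = e^{iπ/4}. -/
def omg : ℂ := Complex.exp (Real.pi * Complex.I / 4)

/-- √2 as a complex number. -/
def rt2 : ℂ := (Real.sqrt 2 : ℝ)

/-- Membership in the ring Z[ω] = {a + bω + cω² + dω³ : a,b,c,d ∈ ℤ}. -/
def Zomega (z : ℂ) : Prop :=
  ∃ a b c d : ℤ, z = a + b * omg + c * omg ^ 2 + d * omg ^ 3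

/-- Membership in the ring Z[1/√2, i] = {u/(√2)^n : u ∈ Z[ω], n ∈ ℕ}. -/
def ZRoot2i (z : ℂ) : Prop :=
  ∃ u : ℂ, Zomega u ∧ ∃ n : ℕ, z = u / rt2 ^ n

/-- `b` divides `z` within the ring Z[ω]. -/
def ZDvd (b z : ℂ) : Prop := ∃ q : ℂ, Zomega q ∧ z = b * q

/-- `k` is the greatest dividing exponent of base `b` with respect to `z`:
`b^k` divides `z` in Z[ω], while `b^(k+1)` does not. -/
def IsGde (b z : ℂ) (k : ℕ) : Prop := ZDvd (b ^ k) z ∧ ¬ ZDvd (b ^ (k + 1)) z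

/-- `k` is the smallest denominator exponent of base √2 with respect to `z`:
the smallest integer `k` such that `z·(√2)^k ∈ Z[ω]`. -/
def IsSde (z : ℂ) (k : ℤ) : Prop :=
  Zomega (z * rt2 ^ k) ∧ ∀ j : ℤ, Zomega (z * rt2 ^ j) → k ≤ j

lemma rt2_sq : rt2 ^ 2 = 2 := by
  rw [rt2]; norm_cast; rw [Real.sq_sqrt]; norm_num

lemma rt2_ne : rt2 ≠ 0 := by
  rw [rt2]; norm_cast; positivity

lemma omg_mul_rt2 : omg * rt2 = 1 + I := by
  have h : omg = ((Real.sqrt 2 / 2 : ℝ) : ℂ) + ((Real.sqrt 2 / 2 : ℝ) : ℂ) * I := by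
    rw [omg, show ((Real.pi : ℂ) * I / 4) = (((Real.pi / 4 : ℝ)) : ℂ) * I by push_cast; ring,
      Complex.exp_mul_I, ← Complex.ofReal_cos, ← Complex.ofReal_sin, Real.cos_pi_div_four,
      Real.sin_pi_div_four]
  have hm : ((Real.sqrt 2 : ℝ) : ℂ) * ((Real.sqrt 2 : ℝ) : ℂ) = 2 := by
    norm_cast; exact Real.mul_self_sqrt (by norm_num)
  rw [h, rt2]
  push_cast
  linear_combination (I / 2 + 1 / 2) * hm

lemma omg_sq : omg ^ 2 = I := by
  have h := omg_mul_rt2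
  have h2 := rt2_sq
  have hI : I ^ 2 = -1 := Complex.I_sq
  have this : (omg * rt2) ^ 2 = (1 + I) ^ 2 := by rw [h]
  linear_combination (this - omg ^ 2 * h2 + hI) / 2

lemma omg_pow4 : omg ^ 4 = -1 := by
  have hs := omg_sq
  have hI : I ^ 2 = -1 := Complex.I_sq
  linear_combination (omg ^ 2 + I) * hs + hI

lemma rt2_eq : rt2 = omg - omg ^ 3 := by
  have h := omg_mul_rt2
  have h2 := rt2_sq
  have hs := omg_sq
  have hI : I ^ 2 = -1 := Complex.I_sq
  have key : rt2 * rt2 = (omg - omg ^ 3) * rt2 := by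
    linear_combination h2 - h + omg ^ 2 * h + (1 + I) * hs + hI
  exact mul_right_cancel₀ rt2_ne key

lemma even_iff_zmod (n : ℤ) : Even n ↔ ((n : ZMod 2) = 0) := by
  rw [ZMod.intCast_zmod_eq_zero_iff_dvd]
  constructor
  · rintro ⟨k, rfl⟩; exact ⟨k, by ring⟩
  · rintro ⟨k, rfl⟩; exact ⟨k, by push_cast; ring⟩

lemma odd_iff_zmod (n : ℤ) : Odd n ↔ ((n : ZMod 2) = 1) := by
  have h : ∀ z : ZMod 2, ¬ z = 0 ↔ z = 1 := by decide
  rw [← Int.not_even_iff_odd, even_iff_zmod, h]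

/-- If x ∈ Z[ω] is not divisible by √2, then exactly one of P(x), Q(x) is odd. -/
theorem stmt16 (x₀ x₁ x₂ x₃ : ℤ)
    (hnd : ¬ ZDvd rt2 ((x₀ : ℂ) + x₁ * omg + x₂ * omg ^ 2 + x₃ * omg ^ 3)) :
    (Even (x₀ ^ 2 + x₁ ^ 2 + x₂ ^ 2 + x₃ ^ 2) ∧ Odd (x₀ * (x₁ - x₃) + x₂ * (x₁ + x₃))) ∨
    (Odd (x₀ ^ 2 + x₁ ^ 2 + x₂ ^ 2 + x₃ ^ 2) ∧ Even (x₀ * (x₁ - x₃) + x₂ * (x₁ + x₃))) := by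
  have key : ¬ (Even (x₀ + x₂) ∧ Even (x₁ + x₃)) := by
    rintro ⟨⟨m, hm⟩, ⟨n, hn⟩⟩
    apply hnd
    refine ⟨((x₁ - n : ℤ) : ℂ) + (m : ℤ) * omg + (n : ℤ) * omg ^ 2 + ((x₂ - m : ℤ) : ℂ) * omg ^ 3,
      ⟨x₁ - n, m, n, x₂ - m, by push_cast; ring⟩, ?_⟩
    have h4 := omg_pow4
    have hr := rt2_eq
    have hm' : (x₀ : ℂ) + x₂ = m + m := by exact_mod_cast hm
    have hn' : (x₁ : ℂ) + x₃ = n + n := by exact_mod_cast hn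
    push_cast
    linear_combination hm' + omg ^ 3 * hn' -
      ((x₂ : ℂ) - 2 * m - n * omg - ((x₂ : ℂ) - m) * omg ^ 2) * h4 -
      (((x₁ : ℂ) - n) + m * omg + n * omg ^ 2 + ((x₂ : ℂ) - m) * omg ^ 3) * hr
  rw [even_iff_zmod, even_iff_zmod] at key
  rw [even_iff_zmod, even_iff_zmod, odd_iff_zmod, odd_iff_zmod]
  push_cast at key ⊢
  revert key
  generalize ((x₀ : ZMod 2)) = a
  generalize ((x₁ : ZMod 2)) = b
  generalize ((x₂ : ZMod 2)) = c
  generalize ((x₃ : ZMod 2)) = d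
  revert a b c d
  decide
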